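/- For p-strings x and y, where lcp∞(u,v) denotes the number of ∞ symbols in the longest common prefix of p-encodings ⟨u⟩ and ⟨v⟩, it holds that lcp∞(⟨x⟩, ⟨y⟩) ≤ lcp∞(⟨x[2..]⟩, ⟨y[2..]⟩) + 1. -/

import Mathlib

/-- Symbols of a parameterized string: static symbols `s a` (from Σs) and
parameter symbols `p a` (from Σp). -/
inductive PSym where
  | s : ℕ → PSym
  | p : ℕ → PSym
deriving DecidableEq

/-- Symbols of a p-encoded string: static symbols, finite distances, and ∞. -/
inductive Enc where
  | s : ℕ → Enc
  | fin : ℕ → Enc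
  | inf : Enc
deriving DecidableEq

/-- Order embedding: static symbols < natural numbers < ∞. -/
def Enc.toPair : Enc → ℕ ×ₗ ℕ
  | .s a => toLex (0, a)
  | .fin d => toLex (1, d)
  | .inf => toLex (2, 0)

instance : LinearOrder Enc :=
  LinearOrder.lift' Enc.toPair (by
    rintro (a | a | _) (b | b | _) h <;>
      simp_all [Enc.toPair, toLex_inj, Prod.ext_iff])

/-- Largest position `j < i` (0-based) carrying the same symbol as position `i`. -/
def prevOcc (w : List PSym) (i : ℕ) : Option ℕ :=
  ((List.range i).filter (fun j => w[j]? = w[i]?)).max?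

/-- The p-encoding of position `i` (0-based) of `w`. -/
def pencSym (w : List PSym) (i : ℕ) : Enc :=
  match w[i]? with
  | some (PSym.s a) => Enc.s a
  | some (PSym.p _) =>
    match prevOcc w i with
    | some j => Enc.fin (i - j)
    | none => Enc.inf
  | none => Enc.inf

/-- The p-encoding ⟨w⟩ of a p-string `w`. -/
def penc (w : List PSym) : List Enc :=
  (List.range w.length).map (pencSym w)

/-- Lexicographic (strict) order on p-encoded strings. -/
def lexLt (x y : List Enc) : Prop := List.Lex (· < ·) x y

def lexLe (x y : List Enc) : Prop := lexLt x y ∨ x = y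

/-- Length of the longest common prefix. -/
def lcp {α : Type*} [DecidableEq α] : List α → List α → ℕ
  | a :: x, b :: y => if a = b then lcp x y + 1 else 0
  | _, _ => 0

/-- Number of ∞'s in the longest common prefix of two p-encoded strings. -/
def lcpInf (x y : List Enc) : ℕ := (x.take (lcp x y)).count Enc.inf

/-- Number of distinct p-symbols occurring in `w` (denoted |w|_p). -/
def distinctP (w : List PSym) : ℕ :=
  (w.filterMap (fun s => match s with | PSym.p a => some a | PSym.s _ => none)).dedup.length

/-- For `w` starting with a p-symbol: the rank of `w[1]` among the distinct
p-symbols of `w[1..h+1]`, where `h+1 = min{|w|, second occurrence of w[1] in w}`. -/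
def fceRank (w : List PSym) : ℕ :=
  match w with
  | [] => 0
  | c :: rest => distinctP ((c :: rest).take (min (c :: rest).length (2 + rest.idxOf c)))

/-- The function fce from the paper; `fce ε = $` is modelled as `Enc.s 0`. -/
def fce (w : List PSym) : Enc :=
  match w with
  | [] => Enc.s 0
  | PSym.s a :: _ => Enc.s a
  | w => Enc.fin (fceRank w)


/-!
Position `i + 1` of `⟨x⟩` and position `i` of `⟨x[2..]⟩` carry the same code, except when the
previous occurrence of the p-symbol lies at the dropped position `0`: then `⟨x⟩` has the distance
`i + 1` and `⟨x[2..]⟩` has `∞`. A distance at position `i` is at most `i`, so `i + 1` never occurs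
there; hence equal codes of `⟨x⟩, ⟨y⟩` at `i + 1` stay equal in the tails, and an `∞` stays `∞`.
So the common prefix shrinks by at most the first position, which is the only `∞` that can be lost.
-/

theorem le_lcp_iff {α : Type*} [DecidableEq α] :
    ∀ {a b : List α} {n : ℕ}, n ≤ lcp a b ↔ n ≤ a.length ∧ a.take n = b.take n
  | _, _, 0 => by simp
  | [], _, n + 1 => by simp [lcp]
  | _ :: _, [], n + 1 => by simp [lcp]
  | x :: a, y :: b, n + 1 => by
    by_cases h : x = y
    · simp [lcp, h, le_lcp_iff (a := a) (b := b) (n := n)]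
    · simp [lcp, h]

theorem prevOcc_succ_of_prevOcc_tail_eq_some {w : List PSym} {i j : ℕ}
    (h : prevOcc w.tail i = some j) : prevOcc w (i + 1) = some (j + 1) := by
  rw [prevOcc, List.max?_eq_some_iff] at h ⊢
  simp only [List.mem_filter, List.mem_range, decide_eq_true_eq, List.getElem?_tail] at h ⊢
  obtain ⟨⟨hji, hj⟩, hmax⟩ := h
  refine ⟨⟨by omega, hj⟩, ?_⟩
  rintro (_ | m) ⟨hm, hmw⟩
  · omega
  · have := hmax m ⟨by omega, hmw⟩
    omega

theorem prevOcc_succ_of_prevOcc_tail_eq_none {w : List PSym} {i : ℕ}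
    (h : prevOcc w.tail i = none) : prevOcc w (i + 1) = none ∨ prevOcc w (i + 1) = some 0 := by
  rw [prevOcc, List.max?_eq_none_iff, List.filter_eq_nil_iff] at h
  simp only [List.mem_range, decide_eq_true_eq, List.getElem?_tail] at h
  rcases hw : prevOcc w (i + 1) with _ | (_ | m)
  · exact .inl rfl
  · exact .inr rfl
  · rw [prevOcc, List.max?_eq_some_iff] at hw
    simp only [List.mem_filter, List.mem_range, decide_eq_true_eq] at hw
    exact absurd hw.1.2 (h m (by omega))

theorem pencSym_ne_fin_succ (w : List PSym) (i : ℕ) : pencSym w i ≠ Enc.fin (i + 1) := by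
  unfold pencSym
  rcases w[i]? with _ | (_ | _)
  · simp
  · simp
  · rcases hw : prevOcc w i with _ | j
    · simp
    · simp only [ne_eq, Enc.fin.injEq]
      omega

theorem pencSym_tail (w : List PSym) (i : ℕ) :
    pencSym w.tail i = pencSym w (i + 1) ∨
      (pencSym w.tail i = Enc.inf ∧ pencSym w (i + 1) = Enc.fin (i + 1)) := by
  have hget : w.tail[i]? = w[i + 1]? := List.getElem?_tail
  rcases hw : w[i + 1]? with _ | (_ | _)
  · simp [pencSym, hget, hw]
  · simp [pencSym, hget, hw]
  · rcases hprev : prevOcc w.tail i with _ | j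
    · rcases prevOcc_succ_of_prevOcc_tail_eq_none hprev with h | h
      · simp [pencSym, hget, hw, hprev, h]
      · simp [pencSym, hget, hw, hprev, h]
    · left
      simp only [pencSym, hget, hw, hprev, prevOcc_succ_of_prevOcc_tail_eq_some hprev]
      congr 1
      omega

theorem pencSym_tail_eq_inf {w : List PSym} {i : ℕ} (h : pencSym w (i + 1) = Enc.inf) :
    pencSym w.tail i = Enc.inf := by
  rcases pencSym_tail w i with h' | ⟨h', -⟩
  · rw [h', h]
  · exact h'

theorem pencSym_tail_eq_of_pencSym_succ_eq {x y : List PSym} {i : ℕ}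
    (h : pencSym x (i + 1) = pencSym y (i + 1)) : pencSym x.tail i = pencSym y.tail i := by
  rcases pencSym_tail x i with hx | ⟨hx, hx'⟩ <;> rcases pencSym_tail y i with hy | ⟨hy, hy'⟩
  · rw [hx, hy, h]
  · exact absurd (hx.trans (h.trans hy')) (pencSym_ne_fin_succ _ _)
  · exact absurd (hy.trans (h.symm.trans hx')) (pencSym_ne_fin_succ _ _)
  · rw [hx, hy]

theorem take_penc {w : List PSym} {n : ℕ} (h : n ≤ w.length) :
    (penc w).take n = (List.range n).map (pencSym w) := by
  rw [penc, ← List.map_take, List.take_range, min_eq_left h]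

theorem length_penc (w : List PSym) : (penc w).length = w.length := by
  simp [penc]

theorem le_lcp_penc_iff {x y : List PSym} {n : ℕ} :
    n ≤ lcp (penc x) (penc y) ↔
      n ≤ x.length ∧ n ≤ y.length ∧ ∀ i < n, pencSym x i = pencSym y i := by
  rw [le_lcp_iff, length_penc]
  constructor
  · rintro ⟨hx, htake⟩
    have hy : n ≤ y.length := by
      have := congrArg List.length htake
      simp only [List.length_take, length_penc] at this
      omega
    rw [take_penc hx, take_penc hy, List.map_inj_left] at htake
    exact ⟨hx, hy, fun i hi => htake i (List.mem_range.2 hi)⟩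
  · rintro ⟨hx, hy, heq⟩
    rw [take_penc hx, take_penc hy, List.map_inj_left]
    exact ⟨hx, fun i hi => heq i (List.mem_range.1 hi)⟩

theorem lcp_penc_le_lcp_penc_tail_add_one (x y : List PSym) :
    lcp (penc x) (penc y) ≤ lcp (penc x.tail) (penc y.tail) + 1 := by
  obtain ⟨hx, hy, heq⟩ := le_lcp_penc_iff.1 (le_refl (lcp (penc x) (penc y)))
  suffices lcp (penc x) (penc y) - 1 ≤ lcp (penc x.tail) (penc y.tail) by omega
  refine le_lcp_penc_iff.2
    ⟨?_, ?_, fun i hi => pencSym_tail_eq_of_pencSym_succ_eq (heq _ (by omega))⟩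
  all_goals rw [List.length_tail]; omega

theorem lcpInf_penc (x y : List PSym) :
    lcpInf (penc x) (penc y) =
      (List.range (lcp (penc x) (penc y))).countP (fun i => pencSym x i = Enc.inf) := by
  rw [lcpInf, take_penc (le_lcp_penc_iff.1 le_rfl).1, List.count_eq_countP, List.countP_map]
  rfl

theorem countP_range_succ_le {p q : ℕ → Bool} {k m : ℕ} (hkm : k ≤ m)
    (hpq : ∀ i < k, p (i + 1) → q i) :
    (List.range (k + 1)).countP p ≤ (List.range m).countP q + 1 := by
  have hshift : (List.range k).countP (fun i => p (i + 1)) ≤ (List.range k).countP q :=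
    List.countP_mono_left fun i hi => hpq i (List.mem_range.1 hi)
  have hmono : (List.range k).countP q ≤ (List.range m).countP q :=
    (List.range_sublist.2 hkm).countP_le
  simp only [List.range_succ_eq_map, List.countP_cons, List.countP_map, Function.comp_def,
    Nat.succ_eq_add_one]
  split <;> omega

/-- lcp∞(⟨x⟩, ⟨y⟩) ≤ lcp∞(⟨x[2..]⟩, ⟨y[2..]⟩) + 1. -/
theorem stmt3 (x y : List PSym) :
    lcpInf (penc x) (penc y) ≤ lcpInf (penc x.tail) (penc y.tail) + 1 := by
  rw [lcpInf_penc, lcpInf_penc]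
  rcases hL : lcp (penc x) (penc y) with _ | k
  · simp
  refine countP_range_succ_le ?_ fun i _ h => ?_
  · have := lcp_penc_le_lcp_penc_tail_add_one x y
    omega
  · simpa using pencSym_tail_eq_inf (by simpa using h)
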